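/- arXiv:2604.17394 — 2 statements merged into one kernel-verified Lean document; each statement's English description precedes it below -/
import Mathlib

section
/- Let (R,Q,α) be a prelog ring. Then the functor M ↦ FDer_{(R,Q,α)}(M) on R-modules is representable: there exists an R-module FΩ_{(R,Q,α)} together with a universal log FW-derivation (w: R → FΩ_{(R,Q,α)}, wlog: Q → FΩ_{(R,Q,α)}), such that for every R-module M the map Hom_R(FΩ_{(R,Q,α)}, M) → FDer_{(R,Q,α)}(M), u ↦ (u∘w, u∘wlog), is a bijection. Explicitly, FΩ_{(R,Q,α)} is the quotient of FΩ_R ⊕ (R ⊗_ℤ Q^{gp}) by the submodule generated by (w₀(α(x)), −α(x)^p ⊗ x) for x ∈ Q, where w₀: R → FΩ_R is the universal FW-derivation. -/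
open scoped TensorProduct

/-- The polynomial `P(X,Y) = ((X+Y)^p - X^p - Y^p)/p` evaluated at `a, b`. -/
def fwP {R : Type*} [CommRing R] (p : ℕ) (a b : R) : R :=
  ∑ i ∈ Finset.Ioo 0 p, (Nat.choose p i / p : ℕ) • (a ^ i * b ^ (p - i))

/-- A Frobenius–Witt derivation. -/
structure IsFWDerivation {R M : Type*} [CommRing R] [AddCommGroup M] [Module R M]
    (p : ℕ) (D : R → M) : Prop where
  map_add' : ∀ a b : R, D (a + b) = D a + D b - fwP p a b • D (p : R)
  map_mul' : ∀ a b : R, D (a * b) = b ^ p • D a + a ^ p • D b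

/-- A logarithmic Frobenius–Witt derivation of the prelog ring `(R, Q, α)`. -/
structure IsLogFWDerivation {R M Q : Type*} [CommRing R] [AddCommGroup M] [Module R M]
    [CommMonoid Q] (p : ℕ) (α : Q →* R) (D : R → M) (δ : Q → M) : Prop where
  toFW : IsFWDerivation p D
  map_one' : δ 1 = 0
  map_mul' : ∀ x y : Q, δ (x * y) = δ x + δ y
  compat : ∀ x : Q, D (α x) = α x ^ p • δ x

/-- The congruence on `Q` identifying elements differing by a unit;
its quotient is the sharpification `Q̄ = Q/Q^×`. -/
def sharpCon (Q : Type*) [CommMonoid Q] : Con Q where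
  r x y := ∃ u : Qˣ, x = y * u
  iseqv := by
    refine ⟨fun x => ⟨1, by simp⟩, ?_, ?_⟩
    · rintro x y ⟨u, rfl⟩; exact ⟨u⁻¹, by simp⟩
    · rintro x y z ⟨u, rfl⟩ ⟨v, rfl⟩; exact ⟨v * u, by rw [Units.val_mul, mul_assoc]⟩
  mul' := by
    rintro a b c d ⟨u, rfl⟩ ⟨v, rfl⟩
    exact ⟨u * v, by rw [Units.val_mul]; exact mul_mul_mul_comm b u d v⟩

/-- An ideal of a commutative monoid. -/
def IsMonIdeal {Q : Type*} [CommMonoid Q] (I : Set Q) : Prop :=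
  ∀ a x : Q, x ∈ I → a * x ∈ I

/-- A prime ideal of a commutative monoid: an ideal whose complement is a submonoid. -/
def IsPrimeMonIdeal {Q : Type*} [CommMonoid Q] (I : Set Q) : Prop :=
  IsMonIdeal I ∧ (1 : Q) ∉ I ∧ ∀ x y : Q, x * y ∈ I → x ∈ I ∨ y ∈ I

/-- The dimension of a commutative monoid: the Krull dimension of its poset of prime ideals. -/
noncomputable def monDim (Q : Type*) [CommMonoid Q] : WithBot (WithTop ℕ) :=
  Order.krullDim {I : Set Q // IsPrimeMonIdeal I}

/-- A commutative monoid is integral (cancellative). -/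
def IsIntegralMon (Q : Type*) [CommMonoid Q] : Prop :=
  ∀ a b c : Q, a * b = a * c → b = c

/-- A commutative monoid is saturated: it is integral and whenever `x ∈ Q^{gp}` satisfies
`x^n ∈ Q` for some `n > 0`, then `x ∈ Q`; intrinsically, `a^n ∣ b^n → a ∣ b`. -/
def IsSaturatedMon (Q : Type*) [CommMonoid Q] : Prop :=
  IsIntegralMon Q ∧ ∀ (a b : Q) (n : ℕ), 0 < n → a ^ n ∣ b ^ n → a ∣ b

/-- A commutative monoid is sharp if its only unit is `1`. -/
def IsSharpMon (Q : Type*) [CommMonoid Q] : Prop :=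
  ∀ x : Q, IsUnit x → x = 1

/-- The ideal `I_α` of a prelog ring `(R, Q, α)`, generated by `α(Q⁺)`. -/
def prelogIdeal {R Q : Type*} [CommRing R] [CommMonoid Q] (α : Q →* R) : Ideal R :=
  Ideal.span (α '' {x : Q | ¬ IsUnit x})

/-- A Noetherian local ring is regular: its maximal ideal (= the ideal of nonunits) is
generated by `dim R` elements. -/
def IsRegularLocal (S : Type*) [CommRing S] : Prop :=
  IsNoetherianRing S ∧ IsLocalRing S ∧
    ∃ (n : ℕ) (s : Fin n → S),
      Ideal.span (Set.range s) = Ideal.span {x : S | ¬ IsUnit x} ∧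
      ringKrullDim S = (n : WithBot (WithTop ℕ))

/-- Log regularity of a local prelog ring `(R, Q, α)`. -/
def IsLogRegular {R Q : Type*} [CommRing R] [CommMonoid Q] (α : Q →* R) : Prop :=
  IsRegularLocal (R ⧸ prelogIdeal α) ∧
    ringKrullDim R = ringKrullDim (R ⧸ prelogIdeal α) + (id (monDim Q) : WithBot ℕ∞)

/-!
Log FW-derivations are cut out of all pairs `(D, δ)` by equations that are linear in `D` and `δ`:
each axiom says that a certain "defect" vector vanishes, and linear maps carry defects to defects.
So the free module on the symbols `d a` (`a : R`) and `dlog x` (`x : Q`), divided by the span of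
the defects of the tautological pair, represents the functor. Presenting `FΩ_R` and `Q^gp` by
generators and relations too shows that this is the paper's module `FΩ_R ⊕ (R ⊗ Q^gp)` modulo
`(w₀(α x), -α(x)^p ⊗ x)`.
-/

open Finsupp

variable {R Q M N : Type*} [CommRing R] [CommMonoid Q] [AddCommGroup M] [Module R M]
  [AddCommGroup N] [Module R N] (p : ℕ) (α : Q →* R)

def logFWDefects (D : R → M) (δ : Q → M) : Set M :=
  Set.range (fun ab : R × R => D (ab.1 + ab.2) - (D ab.1 + D ab.2 - fwP p ab.1 ab.2 • D p)) ∪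
  Set.range (fun ab : R × R => D (ab.1 * ab.2) - (ab.2 ^ p • D ab.1 + ab.1 ^ p • D ab.2)) ∪
  {δ 1} ∪
  Set.range (fun xy : Q × Q => δ (xy.1 * xy.2) - (δ xy.1 + δ xy.2)) ∪
  Set.range (fun x : Q => D (α x) - α x ^ p • δ x)

theorem isLogFWDerivation_iff_logFWDefects_subset (D : R → M) (δ : Q → M) :
    IsLogFWDerivation p α D δ ↔ logFWDefects p α D δ ⊆ {0} := by
  simp only [logFWDefects, Set.union_subset_iff, Set.range_subset_iff, Set.singleton_subset_iff,
    Set.mem_singleton_iff, sub_eq_zero, Prod.forall]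
  exact ⟨fun h => ⟨⟨⟨⟨h.toFW.map_add', h.toFW.map_mul'⟩, h.map_one'⟩, h.map_mul'⟩, h.compat⟩,
    fun ⟨⟨⟨⟨hadd, hmul⟩, hone⟩, hmul'⟩, hcompat⟩ => ⟨⟨hadd, hmul⟩, hone, hmul', hcompat⟩⟩

theorem LinearMap.image_logFWDefects (f : M →ₗ[R] N) (D : R → M) (δ : Q → M) :
    f '' logFWDefects p α D δ = logFWDefects p α (f ∘ D) (f ∘ δ) := by
  simp only [logFWDefects, Set.image_union, ← Set.range_comp, Set.image_singleton]
  simp [Function.comp_def]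

noncomputable abbrev logFWRelations : Submodule R ((R ⊕ Q) →₀ R) :=
  Submodule.span R (logFWDefects p α (fun a => single (.inl a) 1) (fun x => single (.inr x) 1))

noncomputable abbrev LogFWDifferentials := ((R ⊕ Q) →₀ R) ⧸ logFWRelations p α

namespace LogFWDifferentials

noncomputable def d (a : R) : LogFWDifferentials p α :=
  Submodule.Quotient.mk (single (.inl a) 1)

noncomputable def dlog (x : Q) : LogFWDifferentials p α :=
  Submodule.Quotient.mk (single (.inr x) 1)

theorem isLogFWDerivation_d_dlog : IsLogFWDerivation p α (d p α) (dlog p α) := by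
  rw [isLogFWDerivation_iff_logFWDefects_subset,
    show d p α = (logFWRelations p α).mkQ ∘ _ from rfl,
    show dlog p α = (logFWRelations p α).mkQ ∘ _ from rfl, ← LinearMap.image_logFWDefects]
  rintro _ ⟨v, hv, rfl⟩
  exact (Submodule.Quotient.mk_eq_zero _).2 (Submodule.subset_span hv)

variable {p α}

theorem logFWRelations_le_ker {D : R → M} {δ : Q → M} (h : IsLogFWDerivation p α D δ) :
    logFWRelations p α ≤ LinearMap.ker (linearCombination R (Sum.elim D δ)) := by
  have hfD : linearCombination R (Sum.elim D δ) ∘ (fun a => single (.inl a) 1) = D := by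
    funext a; simp
  have hfδ : linearCombination R (Sum.elim D δ) ∘ (fun x => single (.inr x) 1) = δ := by
    funext x; simp
  have hsub : linearCombination R (Sum.elim D δ) '' logFWDefects p α
      (fun a => single (.inl a) 1) (fun x => single (.inr x) 1) ⊆ {0} := by
    rw [LinearMap.image_logFWDefects, hfD, hfδ]
    exact (isLogFWDerivation_iff_logFWDefects_subset p α D δ).1 h
  exact Submodule.span_le.2 fun v hv => hsub ⟨v, hv, rfl⟩

noncomputable def lift {D : R → M} {δ : Q → M} (h : IsLogFWDerivation p α D δ) :
    LogFWDifferentials p α →ₗ[R] M :=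
  (logFWRelations p α).liftQ _ (logFWRelations_le_ker h)

@[simp]
theorem lift_d {D : R → M} {δ : Q → M} (h : IsLogFWDerivation p α D δ) (a : R) :
    lift h (d p α a) = D a := by
  simp [lift, d]

@[simp]
theorem lift_dlog {D : R → M} {δ : Q → M} (h : IsLogFWDerivation p α D δ) (x : Q) :
    lift h (dlog p α x) = δ x := by
  simp [lift, dlog]

theorem hom_ext {f g : LogFWDifferentials p α →ₗ[R] M} (hd : ∀ a, f (d p α a) = g (d p α a))
    (hdlog : ∀ x, f (dlog p α x) = g (dlog p α x)) : f = g := by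
  refine Submodule.linearMap_qext _ (lhom_ext' fun z => LinearMap.ext_ring ?_)
  cases z with
  | inl a => exact hd a
  | inr x => exact hdlog x

end LogFWDifferentials

open LogFWDifferentials in
theorem stmt7_general (p : ℕ) {R Q : Type} [CommRing R] [CommMonoid Q]
    (α : Q →* R) :
    ∃ (FΩ : ModuleCat.{0} R) (w : R → FΩ) (δ : Q → FΩ),
      IsLogFWDerivation p α w δ ∧
      ∀ (M : ModuleCat.{0} R) (D : R → M) (d : Q → M), IsLogFWDerivation p α D d →
        ∃! u : FΩ →ₗ[R] M, (∀ a : R, u (w a) = D a) ∧ ∀ x : Q, u (δ x) = d x :=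
  ⟨.of R (LogFWDifferentials p α), d p α, dlog p α, isLogFWDerivation_d_dlog p α,
    fun _ _ _ h => ⟨lift h, ⟨lift_d h, lift_dlog h⟩,
      fun _ hu => hom_ext (fun a => (hu.1 a).trans (lift_d h a).symm)
        fun x => (hu.2 x).trans (lift_dlog h x).symm⟩⟩

/-- the functor of log FW-derivations of a prelog ring `(R, Q, α)` is
representable by a universal log FW-derivation `(w, wlog)`. -/
theorem stmt7 (p : ℕ) (hp : p.Prime) {R Q : Type} [CommRing R] [CommMonoid Q]
    (α : Q →* R) :
    ∃ (FΩ : ModuleCat.{0} R) (w : R → FΩ) (δ : Q → FΩ),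
      IsLogFWDerivation p α w δ ∧
      ∀ (M : ModuleCat.{0} R) (D : R → M) (d : Q → M), IsLogFWDerivation p α D d →
        ∃! u : FΩ →ₗ[R] M, (∀ a : R, u (w a) = D a) ∧ ∀ x : Q, u (δ x) = d x :=
  stmt7_general p α
end

section
/- Let (R,Q,α) be a prelog ring, S ⊆ Q a submonoid, T ⊆ (R,·) a multiplicative submonoid with α(S) ⊆ T. Then there are natural isomorphisms T⁻¹ F̃Ω_{(R,Q,α)} ≅ F̃Ω_{(T⁻¹R, Q, ια)} ≅ F̃Ω_{(T⁻¹R, S⁻¹Q, α̃)}, where ι: R → T⁻¹R is the localization map and α̃: S⁻¹Q → T⁻¹R is induced by α. -/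
open scoped TensorProduct

/-! The extension of `D` to `T⁻¹R` is forced by the Leibniz rule: from `a = (a/t)·t` one gets
`t^p D(a/t) = D a - (a/t)^p D t`, i.e. `D(a/t) = (t^p D a - a^p D t)/t^{2p}`. Conversely this
quotient formula is invariant under `(a, t) ↦ (c a, c t)`, so it is well defined, and the
FW-derivation rules for it reduce to those of `D` (for sums, using
`(x + y)^p = x^p + y^p + p P(x, y)` and `p M = 0`). On the monoid side `δ` is a homomorphism to
a group, hence extends uniquely to `S⁻¹Q` by the universal property, and the compatibility
`D(α z) = α(z)^p δ(z)` passes to products and to inverses. -/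

section fwP

variable {R : Type*} [CommRing R]

lemma fwP_comm (p : ℕ) (a b : R) : fwP p a b = fwP p b a := by
  unfold fwP
  refine Finset.sum_nbij' (p - ·) (p - ·) ?_ ?_ ?_ ?_ ?_ <;> intro i hi <;>
    simp only [Finset.mem_Ioo] at hi ⊢
  iterate 4 omega
  rw [Nat.choose_symm hi.2.le, Nat.sub_sub_self hi.2.le, mul_comm]

lemma fwP_mul_mul (p : ℕ) (c a b : R) : fwP p (c * a) (c * b) = c ^ p * fwP p a b := by
  unfold fwP
  rw [Finset.mul_sum]
  refine Finset.sum_congr rfl fun i hi => ?_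
  have hc : c ^ i * c ^ (p - i) = c ^ p := by
    rw [← pow_add, Nat.add_sub_cancel' (Finset.mem_Ioo.mp hi).2.le]
  rw [nsmul_eq_mul, nsmul_eq_mul, mul_pow, mul_pow]
  linear_combination ((p.choose i / p : ℕ) : R) * (a ^ i * b ^ (p - i)) * hc

lemma map_fwP {S : Type*} [CommRing S] (f : R →+* S) (p : ℕ) (a b : R) :
    f (fwP p a b) = fwP p (f a) (f b) := by
  simp only [fwP, map_sum, map_nsmul, map_mul, map_pow]

lemma add_pow_eq_add_add_mul_fwP {p : ℕ} (hp : p.Prime) (a b : R) :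
    (a + b) ^ p = a ^ p + b ^ p + p * fwP p a b := by
  have hrange : Finset.range (p + 1) = insert 0 (insert p (Finset.Ioo 0 p)) := by
    ext i; simp only [Finset.mem_range, Finset.mem_insert, Finset.mem_Ioo]; omega
  have h0 : (0 : ℕ) ∉ insert p (Finset.Ioo 0 p) := by
    simp only [Finset.mem_insert, Finset.mem_Ioo]; have := hp.pos; omega
  have hp' : p ∉ Finset.Ioo 0 p := by simp
  have hterm : ∀ i ∈ Finset.Ioo 0 p, a ^ i * b ^ (p - i) * (p.choose i : R)
      = p * ((p.choose i / p : ℕ) • (a ^ i * b ^ (p - i))) := by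
    intro i hi
    obtain ⟨hi0, hip⟩ := Finset.mem_Ioo.mp hi
    rw [nsmul_eq_mul, ← Nat.mul_div_cancel' (hp.dvd_choose_self hi0.ne' hip), Nat.cast_mul,
      Nat.mul_div_cancel_left _ hp.pos]
    ring
  rw [add_pow, hrange, Finset.sum_insert h0, Finset.sum_insert hp', Finset.sum_congr rfl hterm,
    fwP, Finset.mul_sum]
  simp only [pow_zero, Nat.sub_zero, one_mul, Nat.choose_zero_right, Nat.cast_one, mul_one,
    Nat.sub_self, Nat.choose_self]
  ring

end fwP

def fwQuot {R M : Type*} [CommRing R] [AddCommGroup M] [Module R M] (p : ℕ) (D : R → M)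
    (a t : R) : M :=
  t ^ p • D a - a ^ p • D t

namespace IsFWDerivation

variable {R M : Type*} [CommRing R] [AddCommGroup M] [Module R M] {p : ℕ} {D : R → M}

lemma map_one (hD : IsFWDerivation p D) : D 1 = 0 := by
  simpa using hD.map_mul' 1 1

lemma fwQuot_one (hD : IsFWDerivation p D) (a : R) : fwQuot p D a 1 = D a := by
  simp [fwQuot, hD.map_one]

lemma fwQuot_mul_mul (hD : IsFWDerivation p D) (c a t : R) :
    fwQuot p D (c * a) (c * t) = c ^ (2 * p) • fwQuot p D a t := by
  simp only [fwQuot, hD.map_mul']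
  module

lemma fwQuot_mul (hD : IsFWDerivation p D) (a b t u : R) :
    fwQuot p D (a * b) (t * u) = (b * u) ^ p • fwQuot p D a t + (a * t) ^ p • fwQuot p D b u := by
  simp only [fwQuot, hD.map_mul']
  module

lemma fwQuot_add (hD : IsFWDerivation p D) (hp : p.Prime) (hpM : ∀ m : M, p • m = 0)
    (a b t u : R) :
    fwQuot p D (t * b + u * a) (t * u) = u ^ (2 * p) • fwQuot p D a t
      + t ^ (2 * p) • fwQuot p D b u - ((t * u) ^ p * fwP p (t * b) (u * a)) • D p := by
  have hpR : ∀ (r : R) (m : M), ((p : R) * r) • m = 0 := fun r m => by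
    rw [mul_smul, Nat.cast_smul_eq_nsmul, hpM]
  simp only [fwQuot, hD.map_add', hD.map_mul', add_pow_eq_add_add_mul_fwP hp]
  linear_combination (norm := module)
    -hpR (fwP p (t * b) (u * a) * u ^ p) (D t) - hpR (fwP p (t * b) (u * a) * t ^ p) (D u)

end IsFWDerivation

section Localization

open Localization

variable {R M : Type*} [CommRing R] [AddCommGroup M] {T : Submonoid R} {p : ℕ}

theorem IsFWDerivation.eq_of_comp_algebraMap_eq {A : Type*} [CommRing A] [Algebra R A]
    [IsLocalization T A] [Module A M] {F G : A → M} (hF : IsFWDerivation p F)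
    (hG : IsFWDerivation p G) (h : ∀ a, F (algebraMap R A a) = G (algebraMap R A a)) :
    F = G := by
  funext z
  obtain ⟨⟨a, t⟩, rfl⟩ := IsLocalization.mk'_surjective T z
  have hFa := hF.map_mul' (IsLocalization.mk' A a t) (algebraMap R A t)
  have hGa := hG.map_mul' (IsLocalization.mk' A a t) (algebraMap R A t)
  rw [IsLocalization.mk'_spec, h, h t] at hFa
  rw [IsLocalization.mk'_spec] at hGa
  refine ((IsLocalization.map_units A t).pow p).smul_left_cancel.mp ?_
  rw [← sub_eq_of_eq_add hFa, ← sub_eq_of_eq_add hGa]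

variable [Module R M] [Module (Localization T) M] [IsScalarTower R (Localization T) M]
  {D : R → M}

lemma IsFWDerivation.mk_pow_smul_fwQuot_mul_mul (hD : IsFWDerivation p D) (a : R) (c t : T) :
    (Localization.mk 1 (c * t) : Localization T) ^ (2 * p) • fwQuot p D (c * a) ↑(c * t)
      = (Localization.mk 1 t : Localization T) ^ (2 * p) • fwQuot p D a t := by
  rw [Submonoid.coe_mul, hD.fwQuot_mul_mul, ← algebraMap_smul (Localization T) ((c : R) ^ _),
    smul_smul]
  congr 1
  simp only [← mk_one_eq_algebraMap, mk_pow, mk_mul, mk_eq_mk_iff, r_iff_exists]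
  exact ⟨1, by push_cast; ring⟩

def IsFWDerivation.extendLocalization (hD : IsFWDerivation p D) : Localization T → M :=
  fun z => z.liftOn (fun a t => (Localization.mk 1 t : Localization T) ^ (2 * p) • fwQuot p D a t)
    fun {a b t u} h => by
      obtain ⟨c, hc⟩ := r_iff_exists.mp h
      have hcua : ((c * u : T) : R) * a = ((c * t : T) : R) * b := by
        push_cast
        rw [mul_assoc, hc, mul_assoc]
      rw [← hD.mk_pow_smul_fwQuot_mul_mul a (c * u) t, ← hD.mk_pow_smul_fwQuot_mul_mul b (c * t) u,
        hcua, mul_right_comm c u t]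

namespace IsFWDerivation

variable (hD : IsFWDerivation p D)
include hD

lemma extendLocalization_mk (a : R) (t : T) :
    hD.extendLocalization (Localization.mk a t)
      = (Localization.mk 1 t : Localization T) ^ (2 * p) • fwQuot p D a t :=
  rfl

lemma extendLocalization_algebraMap (a : R) :
    hD.extendLocalization (algebraMap R (Localization T) a) = D a := by
  rw [← mk_one_eq_algebraMap, extendLocalization_mk, OneMemClass.coe_one, hD.fwQuot_one, mk_one,
    one_pow, one_smul]

lemma extendLocalization_mul (x y : Localization T) :
    hD.extendLocalization (x * y)
      = y ^ p • hD.extendLocalization x + x ^ p • hD.extendLocalization y := by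
  induction x using Localization.induction_on with | H x => ?_
  induction y using Localization.induction_on with | H y => ?_
  obtain ⟨a, t⟩ := x
  obtain ⟨b, u⟩ := y
  rw [mk_mul, extendLocalization_mk, extendLocalization_mk, extendLocalization_mk,
    Submonoid.coe_mul, hD.fwQuot_mul, smul_add, ← algebraMap_smul (Localization T) ((b * _) ^ p),
    ← algebraMap_smul (Localization T) ((a * _) ^ p), smul_smul, smul_smul, smul_smul, smul_smul]
  congr 2 <;>
  · simp only [← mk_one_eq_algebraMap, mk_pow, mk_mul, mk_eq_mk_iff, r_iff_exists]
    exact ⟨1, by push_cast; ring⟩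

lemma extendLocalization_add (hp : p.Prime) (hpM : ∀ m : M, p • m = 0) (x y : Localization T) :
    hD.extendLocalization (x + y) = hD.extendLocalization x + hD.extendLocalization y
      - fwP p x y • hD.extendLocalization (p : Localization T) := by
  induction x using Localization.induction_on with | H x => ?_
  induction y using Localization.induction_on with | H y => ?_
  obtain ⟨a, t⟩ := x
  obtain ⟨b, u⟩ := y
  have hfwP : fwP p (Localization.mk a t) (Localization.mk b u)
      = (Localization.mk 1 (t * u) : Localization T) ^ p
        * algebraMap R (Localization T) (fwP p (t * b) (u * a)) := by
    have hat : (Localization.mk a t : Localization T)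
        = Localization.mk 1 (t * u) * algebraMap R (Localization T) (u * a) := by
      rw [← mk_one_eq_algebraMap, mk_mul, mk_eq_mk_iff, r_iff_exists]
      exact ⟨1, by push_cast; ring⟩
    have hbu : (Localization.mk b u : Localization T)
        = Localization.mk 1 (t * u) * algebraMap R (Localization T) (t * b) := by
      rw [← mk_one_eq_algebraMap, mk_mul, mk_eq_mk_iff, r_iff_exists]
      exact ⟨1, by push_cast; ring⟩
    rw [hat, hbu, fwP_mul_mul, ← map_fwP, fwP_comm]
  rw [add_mk, extendLocalization_mk, extendLocalization_mk, extendLocalization_mk,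
    ← map_natCast (algebraMap R (Localization T)), extendLocalization_algebraMap,
    Submonoid.coe_mul, hD.fwQuot_add hp hpM, smul_sub, smul_add, hfwP]
  simp only [← algebraMap_smul (Localization T) (_ ^ (2 * p) : R),
    ← algebraMap_smul (Localization T) (_ * fwP p _ _ : R), smul_smul]
  congr 1
  · congr 2 <;>
    · simp only [← mk_one_eq_algebraMap, mk_pow, mk_mul, mk_eq_mk_iff, r_iff_exists]
      exact ⟨1, by push_cast; ring⟩
  · congr 1
    simp only [← mk_one_eq_algebraMap, mk_pow, mk_mul, mk_eq_mk_iff, r_iff_exists]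
    exact ⟨1, by push_cast; ring⟩

theorem isFWDerivation_extendLocalization (hp : p.Prime) (hpM : ∀ m : M, p • m = 0) :
    IsFWDerivation p (hD.extendLocalization (T := T)) :=
  ⟨hD.extendLocalization_add hp hpM, hD.extendLocalization_mul⟩

theorem existsUnique_localization (hp : p.Prime) (hpM : ∀ m : M, p • m = 0) :
    ∃! D' : Localization T → M,
      IsFWDerivation p D' ∧ ∀ a : R, D' (algebraMap R (Localization T) a) = D a :=
  ⟨hD.extendLocalization, ⟨hD.isFWDerivation_extendLocalization hp hpM,
      hD.extendLocalization_algebraMap⟩,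
    fun _ hF => eq_of_comp_algebraMap_eq (T := T) hF.1 (hD.isFWDerivation_extendLocalization hp hpM)
      fun a => (hF.2 a).trans (hD.extendLocalization_algebraMap a).symm⟩

end IsFWDerivation

end Localization

theorem IsLogFWDerivation.existsUnique_localization {R Q M : Type*} [CommRing R] [CommMonoid Q]
    [AddCommGroup M] [Module R M] {T : Submonoid R} [Module (Localization T) M]
    [IsScalarTower R (Localization T) M] {p : ℕ} (hp : p.Prime) (hpM : ∀ m : M, p • m = 0)
    {α : Q →* R} {D : R → M} {δ : Q → M} (h : IsLogFWDerivation p α D δ) :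
    ∃! D' : Localization T → M,
      IsLogFWDerivation p ((algebraMap R (Localization T)).toMonoidHom.comp α) D' δ ∧
        ∀ a : R, D' (algebraMap R (Localization T) a) = D a := by
  obtain ⟨D', ⟨hD', hres⟩, huniq⟩ := h.toFW.existsUnique_localization (T := T) hp hpM
  refine ⟨D', ⟨⟨hD', h.map_one', h.map_mul', fun x => ?_⟩, hres⟩,
    fun F hF => huniq F ⟨hF.1.toFW, hF.2⟩⟩
  change D' (algebraMap R _ (α x)) = algebraMap R _ (α x) ^ p • δ x
  rw [hres, h.compat, ← map_pow (algebraMap R _), algebraMap_smul]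

theorem Localization.existsUnique_extend_of_map_mul {Q M : Type*} [CommMonoid Q]
    [AddCommGroup M] (S : Submonoid Q) {δ : Q → M} (h1 : δ 1 = 0)
    (hmul : ∀ x y, δ (x * y) = δ x + δ y) :
    ∃! δ' : Localization S → M, (δ' 1 = 0 ∧ ∀ z w, δ' (z * w) = δ' z + δ' w) ∧
      ∀ x, δ' (Localization.mk x 1) = δ x := by
  let g : Q →* Multiplicative M :=
    { toFun := fun x => .ofAdd (δ x)
      map_one' := congrArg _ h1
      map_mul' := fun x y => congrArg _ (hmul x y) }
  let L := (monoidOf S).lift (g := g) fun _ => Group.isUnit _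
  refine ⟨fun z => (L z).toAdd, ⟨⟨congrArg _ L.map_one, fun z w => congrArg _ (L.map_mul z w)⟩,
    fun x => congrArg _ ((monoidOf S).lift_eq _ x)⟩, ?_⟩
  rintro F ⟨⟨hF1, hFmul⟩, hFres⟩
  let j : Localization S →* Multiplicative M :=
    { toFun := fun z => .ofAdd (F z)
      map_one' := congrArg _ hF1
      map_mul' := fun z w => congrArg _ (hFmul z w) }
  have hLj : L = j := (monoidOf S).lift_unique _ fun x => congrArg Multiplicative.ofAdd (hFres x)
  funext z
  exact congrArg (fun φ : Localization S →* Multiplicative M => (φ z).toAdd) hLj.symm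

namespace IsFWDerivation

variable {A P M : Type*} [CommRing A] [CommMonoid P] [AddCommGroup M] [Module A M] {p : ℕ}
  {D : A → M} {δ : P → M} (β : P →* A)

lemma compat_mul (hD : IsFWDerivation p D) (hδ : ∀ x y, δ (x * y) = δ x + δ y) {z w : P}
    (hz : D (β z) = β z ^ p • δ z) (hw : D (β w) = β w ^ p • δ w) :
    D (β (z * w)) = β (z * w) ^ p • δ (z * w) := by
  rw [map_mul, hD.map_mul', hz, hw, hδ, smul_smul, smul_smul, mul_pow]
  module

lemma compat_of_mul_eq_one (hD : IsFWDerivation p D) (hδ1 : δ 1 = 0)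
    (hδ : ∀ x y, δ (x * y) = δ x + δ y) {z w : P} (hzw : z * w = 1)
    (hz : D (β z) = β z ^ p • δ z) : D (β w) = β w ^ p • δ w := by
  have hβ : β z * β w = 1 := by rw [← map_mul, hzw, β.map_one]
  have hδw : δ w = -δ z := by rw [eq_neg_iff_add_eq_zero, add_comm, ← hδ, hzw, hδ1]
  have hD0 : β w ^ p • D (β z) + β z ^ p • D (β w) = 0 := by
    rw [← hD.map_mul', hβ, hD.map_one]
  refine ((IsUnit.of_mul_eq_one _ hβ).pow p).smul_left_cancel.mp ?_
  rw [eq_neg_of_add_eq_zero_right hD0, hz, hδw]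
  module

end IsFWDerivation

theorem IsLogFWDerivation.existsUnique_localization_monoid {A Q M : Type*} [CommRing A]
    [CommMonoid Q] [AddCommGroup M] [Module A M] {p : ℕ} {S : Submonoid Q}
    {α : Q →* A} {β : Localization S →* A} (hβ : ∀ x, β (Localization.mk x 1) = α x)
    {D : A → M} {δ : Q → M} (h : IsLogFWDerivation p α D δ) :
    ∃! δ' : Localization S → M,
      IsLogFWDerivation p β D δ' ∧ ∀ x : Q, δ' (Localization.mk x 1) = δ x := by
  obtain ⟨δ', ⟨⟨h1, hmul⟩, hres⟩, huniq⟩ :=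
    Localization.existsUnique_extend_of_map_mul S h.map_one' h.map_mul'
  have hcompat_mk (x : Q) :
      D (β (Localization.mk x 1)) = β (Localization.mk x 1) ^ p • δ' (Localization.mk x 1) := by
    rw [hβ, hres, h.compat]
  have hcompat (z : Localization S) : D (β z) = β z ^ p • δ' z := by
    induction z using Localization.induction_on with | H z => ?_
    obtain ⟨x, s⟩ := z
    have hs : Localization.mk (s : Q) 1 * Localization.mk 1 s = 1 := by
      rw [Localization.mk_mul, mul_one, one_mul, Localization.mk_self]
    rw [show Localization.mk x s = Localization.mk x 1 * Localization.mk 1 s by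
      rw [Localization.mk_mul, mul_one, one_mul]]
    exact h.toFW.compat_mul β hmul (hcompat_mk x)
      (h.toFW.compat_of_mul_eq_one β h1 hmul hs (hcompat_mk s))
  exact ⟨δ', ⟨⟨h.toFW, h1, hmul, hcompat⟩, hres⟩,
    fun F hF => huniq F ⟨⟨hF.1.map_one', hF.1.map_mul'⟩, hF.2⟩⟩

theorem stmt16_general (p : ℕ) (hp : p.Prime) {R Q : Type*} [CommRing R] [CommMonoid Q]
    (α : Q →* R) (S : Submonoid Q) (T : Submonoid R)
    (αt : Localization S →* Localization T)
    (hαt : ∀ x : Q, αt (Localization.mk x 1) = Localization.mk (α x) 1)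
    {M : Type*} [AddCommGroup M] [Module (Localization T) M] [Module R M]
    [IsScalarTower R (Localization T) M] (hpM : ∀ m : M, p • m = 0) :
    (∀ (D : R → M) (δ : Q → M), IsLogFWDerivation p α D δ →
      ∃! D' : Localization T → M,
        IsLogFWDerivation p ((algebraMap R (Localization T)).toMonoidHom.comp α) D' δ ∧
        ∀ a : R, D' (algebraMap R (Localization T) a) = D a) ∧
    ∀ (D' : Localization T → M) (δ : Q → M),
      IsLogFWDerivation p ((algebraMap R (Localization T)).toMonoidHom.comp α) D' δ →
        ∃! δ' : Localization S → M,
          IsLogFWDerivation p αt D' δ' ∧ ∀ x : Q, δ' (Localization.mk x 1) = δ x :=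
  ⟨fun _ _ h => h.existsUnique_localization hp hpM,
    fun _ _ h => h.existsUnique_localization_monoid hαt⟩

/-- log FW-derivations mod `p` of `(R,Q,α)`, `(T⁻¹R,Q,ια)` and
`(T⁻¹R, S⁻¹Q, α̃)` correspond bijectively, expressing
`T⁻¹F̃Ω_{(R,Q,α)} ≅ F̃Ω_{(T⁻¹R,Q,ια)} ≅ F̃Ω_{(T⁻¹R,S⁻¹Q,α̃)}`. -/
theorem stmt16 (p : ℕ) (hp : p.Prime) {R Q : Type*} [CommRing R] [CommMonoid Q]
    (α : Q →* R) (S : Submonoid Q) (T : Submonoid R) (hST : ∀ x ∈ S, α x ∈ T)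
    (αt : Localization S →* Localization T)
    (hαt : ∀ x : Q, αt (Localization.mk x 1) = Localization.mk (α x) 1)
    {M : Type*} [AddCommGroup M] [Module (Localization T) M] [Module R M]
    [IsScalarTower R (Localization T) M] (hpM : ∀ m : M, p • m = 0) :
    (∀ (D : R → M) (δ : Q → M), IsLogFWDerivation p α D δ →
      ∃! D' : Localization T → M,
        IsLogFWDerivation p ((algebraMap R (Localization T)).toMonoidHom.comp α) D' δ ∧
        ∀ a : R, D' (algebraMap R (Localization T) a) = D a) ∧
    ∀ (D' : Localization T → M) (δ : Q → M),
      IsLogFWDerivation p ((algebraMap R (Localization T)).toMonoidHom.comp α) D' δ →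
        ∃! δ' : Localization S → M,
          IsLogFWDerivation p αt D' δ' ∧ ∀ x : Q, δ' (Localization.mk x 1) = δ x :=
  stmt16_general p hp α S T αt hαt hpM
end
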